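/- Let A : ℝ^d → ℝ^d be self-adjoint positive definite with smallest eigenvalue λ₁, f : ℝ^d → ℝ^d satisfy ⟨u₁ - u₂, f(u₁) - f(u₂)⟩ ≤ C_f |u₁ - u₂|² with C_f < λ₁, and h > 0. If x, y, x', y' ∈ ℝ^d satisfy the implicit Euler relations x' = x - h A x' + h f(x') and y' = y - h A y' + h f(y'), then (1 + 2h(λ₁ - C_f)) |x' - y'|² ≤ |x - y|². -/
import Mathlib


open scoped InnerProductSpace

theorem backward_euler_one_step_contraction (d : ℕ)
    (A : EuclideanSpace ℝ (Fin d) →ₗ[ℝ] EuclideanSpace ℝ (Fin d))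
    (hA : A.IsSymmetric) (lam1 : ℝ)
    (hAlb : ∀ u : EuclideanSpace ℝ (Fin d), lam1 * ‖u‖ ^ 2 ≤ ⟪A u, u⟫_ℝ)
    (f : EuclideanSpace ℝ (Fin d) → EuclideanSpace ℝ (Fin d)) (Cf : ℝ)
    (hf : ∀ u₁ u₂ : EuclideanSpace ℝ (Fin d),
      ⟪u₁ - u₂, f u₁ - f u₂⟫_ℝ ≤ Cf * ‖u₁ - u₂‖ ^ 2)
    (hCf : Cf < lam1) (h : ℝ) (hh : 0 < h)
    (x y x' y' : EuclideanSpace ℝ (Fin d))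
    (hx : x' = x - h • A x' + h • f x')
    (hy : y' = y - h • A y' + h • f y') :
    (1 + 2 * h * (lam1 - Cf)) * ‖x' - y'‖ ^ 2 ≤ ‖x - y‖ ^ 2 := by
  set e := x - y with he
  set e' := x' - y' with he'
  have h1 : x' - y' = (x - h • A x' + h • f x') - (y - h • A y' + h • f y') := by
    rw [← hx, ← hy]
  have heq : e' = e - h • A e' + h • (f x' - f y') := by
    rw [he', he, map_sub, h1, smul_sub, smul_sub]
    abel
  have key : ‖e'‖ ^ 2 = ⟪e, e'⟫_ℝ - h * ⟪A e', e'⟫_ℝ + h * ⟪f x' - f y', e'⟫_ℝ :=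
    calc ‖e'‖ ^ 2 = ⟪e - h • A e' + h • (f x' - f y'), e'⟫_ℝ := by
          rw [← heq, real_inner_self_eq_norm_sq]
      _ = _ := by
          rw [inner_add_left, inner_sub_left, real_inner_smul_left, real_inner_smul_left]
  have hAe : lam1 * ‖e'‖ ^ 2 ≤ ⟪A e', e'⟫_ℝ := hAlb e'
  have hfe : ⟪f x' - f y', e'⟫_ℝ ≤ Cf * ‖e'‖ ^ 2 := by
    have := hf x' y'
    rwa [real_inner_comm] at this
  have hcs : ⟪e, e'⟫_ℝ ≤ ‖e‖ * ‖e'‖ := real_inner_le_norm e e'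
  have ham : 2 * (‖e‖ * ‖e'‖) ≤ ‖e‖ ^ 2 + ‖e'‖ ^ 2 := by nlinarith [sq_nonneg (‖e‖ - ‖e'‖)]
  nlinarith [hh.le, mul_le_mul_of_nonneg_left hAe hh.le, mul_le_mul_of_nonneg_left hfe hh.le]
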